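/- Let F : [0, ∞) → ℝ be nonincreasing with limit L := lim_{τ→∞} F(τ), and suppose there exist ε₀ ∈ (0, ½) and C₀ > 0 with F(τ) - L ≤ C₀ τ^{-3+ε₀} for all τ ≥ 1. Then for every p ∈ (1, 2] there exists C = C(p, ε₀, C₀) such that for all τ ≥ 1, Σ_{j=0}^{∞} (F(τ+j) - F(τ+j+1))^{1/2} ≤ C τ^{-(3-p-ε₀)/2}. -/
import Mathlib


open Real Filter

private lemma sqrt_le_add {x y : ℝ} (hx : 0 ≤ x) (hy : 0 ≤ y) :
    Real.sqrt (x * y) ≤ x + y := by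
  have h1 : x * y ≤ (x + y) ^ 2 := by nlinarith
  calc Real.sqrt (x * y) ≤ Real.sqrt ((x + y) ^ 2) := Real.sqrt_le_sqrt h1
    _ = x + y := Real.sqrt_sq (by linarith)

private lemma mvt_rpow {q x : ℝ} (hx : 0 < x) :
    ∃ c, x < c ∧ c < x + 1 ∧ (x + 1) ^ q - x ^ q = q * c ^ (q - 1) := by
  have hlt : x < x + 1 := by linarith
  have hcont : ContinuousOn (fun y : ℝ => y ^ q) (Set.Icc x (x + 1)) := fun y hy =>
    (Real.continuousAt_rpow_const y q (Or.inl (ne_of_gt (lt_of_lt_of_le hx hy.1)))).continuousWithinAt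
  have hderiv : ∀ y ∈ Set.Ioo x (x + 1),
      HasDerivAt (fun y : ℝ => y ^ q) (q * y ^ (q - 1)) y := fun y hy =>
    Real.hasDerivAt_rpow_const (Or.inl (ne_of_gt (lt_trans hx hy.1)))
  obtain ⟨c, hc, heq⟩ := exists_hasDerivAt_eq_slope (fun y : ℝ => y ^ q)
    (fun y => q * y ^ (q - 1)) hlt hcont hderiv
  refine ⟨c, hc.1, hc.2, ?_⟩
  rw [heq]
  simp

private lemma rpow_diff_upper {p : ℝ} (hp : 1 ≤ p) {x : ℝ} (hx : 0 ≤ x) :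
    (x + 1) ^ p - x ^ p ≤ p * (x + 1) ^ (p - 1) := by
  rcases eq_or_lt_of_le hx with h | h
  · subst h
    rw [zero_add, Real.one_rpow, Real.zero_rpow (by linarith), Real.one_rpow]
    linarith
  · obtain ⟨c, hc1, hc2, heq⟩ := mvt_rpow (q := p) h
    rw [heq]
    have hcpos : 0 ≤ c := by linarith
    have := Real.rpow_le_rpow hcpos hc2.le (by linarith : 0 ≤ p - 1)
    nlinarith

private lemma rpow_diff_lower {s : ℝ} (hs : 1 < s) {x : ℝ} (hx : 0 < x) :
    (s - 1) * (x + 1) ^ (-s) ≤ x ^ (1 - s) - (x + 1) ^ (1 - s) := by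
  obtain ⟨c, hc1, hc2, heq⟩ := mvt_rpow (q := 1 - s) hx
  rw [show (1 : ℝ) - s - 1 = -s by ring] at heq
  have hcpos : 0 < c := lt_trans hx hc1
  have h3 : (x + 1) ^ (-s) ≤ c ^ (-s) :=
    Real.rpow_le_rpow_of_nonpos hcpos hc2.le (by linarith)
  nlinarith

private lemma sum_rpow_tail {s τ : ℝ} (hs : 1 < s) (hτ : 1 ≤ τ) (N : ℕ) :
    ∑ j ∈ Finset.range N, (τ + j) ^ (-s) ≤ (1 + 1 / (s - 1)) * τ ^ (1 - s) := by
  have hτ0 : (0 : ℝ) < τ := by linarith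
  have hRHSfac : (0 : ℝ) < 1 + 1 / (s - 1) := by
    have : (0 : ℝ) < 1 / (s - 1) := one_div_pos.mpr (by linarith)
    linarith
  cases N with
  | zero =>
    simp only [Finset.range_zero, Finset.sum_empty]
    exact le_of_lt (mul_pos hRHSfac (Real.rpow_pos_of_pos hτ0 _))
  | succ M =>
    rw [Finset.sum_range_succ']
    push_cast
    have h0 : (τ + 0 : ℝ) ^ (-s) ≤ τ ^ (1 - s) := by
      rw [add_zero]
      exact Real.rpow_le_rpow_of_exponent_le hτ (by linarith)
    have hterm : ∀ j ∈ Finset.range M, (τ + (j + 1 : ℝ)) ^ (-s) ≤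
        ((τ + j) ^ (1 - s) - (τ + (j + 1 : ℝ)) ^ (1 - s)) / (s - 1) := by
      intro j _
      have hxj : (0 : ℝ) < τ + j := by positivity
      have := rpow_diff_lower hs hxj
      rw [le_div_iff₀ (by linarith : (0:ℝ) < s - 1)]
      calc (τ + (j + 1 : ℝ)) ^ (-s) * (s - 1)
          = (s - 1) * ((τ + j) + 1) ^ (-s) := by ring_nf
        _ ≤ (τ + j) ^ (1 - s) - ((τ + j) + 1) ^ (1 - s) := this
        _ = (τ + j) ^ (1 - s) - (τ + (j + 1 : ℝ)) ^ (1 - s) := by ring_nf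
    have hsum := Finset.sum_le_sum hterm
    have htel : ∑ j ∈ Finset.range M,
        ((τ + j) ^ (1 - s) - (τ + (j + 1 : ℝ)) ^ (1 - s)) / (s - 1)
        = ((τ + (0:ℕ)) ^ (1 - s) - (τ + (M:ℕ)) ^ (1 - s)) / (s - 1) := by
      rw [← Finset.sum_div]
      congr 1
      have := Finset.sum_range_sub' (fun j : ℕ => (τ + (j : ℝ)) ^ (1 - s)) M
      rw [← this]
      apply Finset.sum_congr rfl
      intro j _
      push_cast
      ring_nf
    have hMnonneg : (0 : ℝ) ≤ (τ + (M : ℕ)) ^ (1 - s) := by positivity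
    have hbound : ∑ j ∈ Finset.range M, (τ + (j + 1 : ℝ)) ^ (-s) ≤ τ ^ (1 - s) / (s - 1) := by
      refine le_trans hsum ?_
      rw [htel]
      push_cast
      rw [add_zero]
      exact (div_le_div_iff_of_pos_right (by linarith : (0:ℝ) < s - 1)).mpr (by linarith)
    calc (∑ j ∈ Finset.range M, (τ + (j + 1 : ℝ)) ^ (-s)) + (τ + 0 : ℝ) ^ (-s)
        ≤ τ ^ (1 - s) / (s - 1) + τ ^ (1 - s) := by linarith
      _ = (1 + 1 / (s - 1)) * τ ^ (1 - s) := by ring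

private lemma abel_id (b : ℕ → ℝ) (p : ℝ) (hp : p ≠ 0) (N : ℕ) :
    ∑ j ∈ Finset.range N, (b j - b (j + 1)) * ((j : ℝ) + 1) ^ p
      = (∑ j ∈ Finset.range N, b j * (((j : ℝ) + 1) ^ p - (j : ℝ) ^ p)) - b N * (N : ℝ) ^ p := by
  induction N with
  | zero => simp [Real.zero_rpow hp]
  | succ N ih =>
    rw [Finset.sum_range_succ, Finset.sum_range_succ, ih]
    push_cast
    ring

theorem stmt9 (F : ℝ → ℝ) (L : ℝ)
    (hmono : AntitoneOn F (Set.Ici (0 : ℝ)))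
    (hlim : Filter.Tendsto F Filter.atTop (nhds L))
    (ε₀ C₀ : ℝ) (hε0 : 0 < ε₀) (hε1 : ε₀ < 1/2) (hC₀ : 0 < C₀)
    (hdecay : ∀ τ : ℝ, 1 ≤ τ → F τ - L ≤ C₀ * τ ^ (-3 + ε₀)) :
    ∀ p : ℝ, 1 < p → p ≤ 2 →
      ∃ C : ℝ, ∀ τ : ℝ, 1 ≤ τ →
        (∑' j : ℕ, Real.sqrt (F (τ + j) - F (τ + j + 1))) ≤ C * τ ^ (-(3 - p - ε₀) / 2) := by
  intro p hp1 hp2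
  set s : ℝ := 4 - p - ε₀ with hs_def
  have hs1 : 1 < s := by rw [hs_def]; linarith
  have hK : Summable (fun j : ℕ => ((j : ℝ) + 1) ^ (-p)) := by
    have h1 : Summable (fun n : ℕ => (n : ℝ) ^ (-p)) :=
      Real.summable_nat_rpow.mpr (by linarith)
    have h2 := (summable_nat_add_iff 1).mpr h1
    exact h2.congr (fun n => by push_cast; ring_nf)
  set K : ℝ := ∑' j : ℕ, ((j : ℝ) + 1) ^ (-p) with hK_def
  set A : ℝ := p * C₀ * (1 + 1 / (s - 1)) with hA_def
  refine ⟨A + K, ?_⟩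
  intro τ hτ
  have hτ0 : (0 : ℝ) < τ := by linarith
  -- nonnegativity of b j = F (τ + j) - L
  have hFL : ∀ x : ℝ, 1 ≤ x → L ≤ F x := by
    intro x hx
    refine le_of_tendsto hlim (eventually_atTop.mpr ⟨x, fun y hy => ?_⟩)
    exact hmono (Set.mem_Ici.mpr (by linarith)) (Set.mem_Ici.mpr (by linarith)) hy
  set b : ℕ → ℝ := fun j => F (τ + j) - L with hb_def
  have hb_nonneg : ∀ j : ℕ, 0 ≤ b j := fun j => by
    have hj := (Nat.cast_nonneg j : (0:ℝ) ≤ j)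
    have : (1 : ℝ) ≤ τ + j := by linarith
    have := hFL _ this
    simp [hb_def]; linarith
  have hb_decay : ∀ j : ℕ, b j ≤ C₀ * (τ + j) ^ (ε₀ - 3) := fun j => by
    have hj := (Nat.cast_nonneg j : (0:ℝ) ≤ j)
    have h1 : (1 : ℝ) ≤ τ + j := by linarith
    have := hdecay (τ + j) h1
    rw [show (-3 : ℝ) + ε₀ = ε₀ - 3 by ring] at this
    exact this
  set a : ℕ → ℝ := fun j => F (τ + j) - F (τ + j + 1) with ha_def
  have hab : ∀ j : ℕ, a j = b j - b (j + 1) := by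
    intro j
    simp only [ha_def, hb_def]
    push_cast
    ring_nf
  have ha_nonneg : ∀ j : ℕ, 0 ≤ a j := fun j => by
    have h1 : (0 : ℝ) ≤ τ + j := by positivity
    have := hmono (Set.mem_Ici.mpr h1) (Set.mem_Ici.mpr (by linarith)) (by linarith : τ + j ≤ τ + j + 1)
    simp [ha_def]; linarith
  -- the weighted sum bound
  have haw_nonneg : ∀ j : ℕ, 0 ≤ a j * ((j : ℝ) + 1) ^ p := fun j =>
    mul_nonneg (ha_nonneg j) (by positivity)
  have haw_bound : ∀ N : ℕ,
      ∑ j ∈ Finset.range N, a j * ((j : ℝ) + 1) ^ p ≤ A * τ ^ (1 - s) := by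
    intro N
    have step1 : ∑ j ∈ Finset.range N, a j * ((j : ℝ) + 1) ^ p
        = (∑ j ∈ Finset.range N, b j * (((j : ℝ) + 1) ^ p - (j : ℝ) ^ p)) - b N * (N : ℝ) ^ p := by
      rw [← abel_id b p (by linarith)]
      exact Finset.sum_congr rfl fun j _ => by rw [hab j]
    have step2 : (∑ j ∈ Finset.range N, b j * (((j : ℝ) + 1) ^ p - (j : ℝ) ^ p)) - b N * (N : ℝ) ^ p
        ≤ ∑ j ∈ Finset.range N, b j * (((j : ℝ) + 1) ^ p - (j : ℝ) ^ p) := by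
      have : 0 ≤ b N * (N : ℝ) ^ p := mul_nonneg (hb_nonneg N) (by positivity)
      linarith
    have step3 : ∑ j ∈ Finset.range N, b j * (((j : ℝ) + 1) ^ p - (j : ℝ) ^ p)
        ≤ ∑ j ∈ Finset.range N, p * C₀ * (τ + j) ^ (-s) := by
      apply Finset.sum_le_sum
      intro j _
      have hj0 : (0 : ℝ) ≤ (j : ℝ) := Nat.cast_nonneg j
      have hup := rpow_diff_upper (le_of_lt hp1) hj0
      have h1 : b j * (((j : ℝ) + 1) ^ p - (j : ℝ) ^ p) ≤ b j * (p * ((j : ℝ) + 1) ^ (p - 1)) :=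
        mul_le_mul_of_nonneg_left hup (hb_nonneg j)
      have h2 : ((j : ℝ) + 1) ^ (p - 1) ≤ (τ + j) ^ (p - 1) :=
        Real.rpow_le_rpow (by positivity) (by linarith) (by linarith)
      have h3 : b j * (p * ((j : ℝ) + 1) ^ (p - 1)) ≤ (C₀ * (τ + j) ^ (ε₀ - 3)) * (p * (τ + j) ^ (p - 1)) := by
        apply mul_le_mul (hb_decay j)
        · exact mul_le_mul_of_nonneg_left h2 (by linarith)
        · positivity
        · positivity
      have hmul : (τ + (j:ℝ)) ^ (ε₀ - 3) * (τ + (j:ℝ)) ^ (p - 1) = (τ + (j:ℝ)) ^ (-s) := by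
        rw [← Real.rpow_add (by positivity : (0:ℝ) < τ + (j:ℝ))]
        congr 1
        rw [hs_def]; ring
      have h4 : (C₀ * (τ + (j:ℝ)) ^ (ε₀ - 3)) * (p * (τ + (j:ℝ)) ^ (p - 1)) = p * C₀ * (τ + (j:ℝ)) ^ (-s) := by
        calc (C₀ * (τ + (j:ℝ)) ^ (ε₀ - 3)) * (p * (τ + (j:ℝ)) ^ (p - 1))
            = p * C₀ * ((τ + (j:ℝ)) ^ (ε₀ - 3) * (τ + (j:ℝ)) ^ (p - 1)) := by ring
          _ = p * C₀ * (τ + (j:ℝ)) ^ (-s) := by rw [hmul]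
      calc b j * (((j : ℝ) + 1) ^ p - (j : ℝ) ^ p) ≤ b j * (p * ((j : ℝ) + 1) ^ (p - 1)) := h1
        _ ≤ (C₀ * (τ + j) ^ (ε₀ - 3)) * (p * (τ + j) ^ (p - 1)) := h3
        _ = p * C₀ * (τ + j) ^ (-s) := h4
    have step4 : ∑ j ∈ Finset.range N, p * C₀ * (τ + j) ^ (-s) ≤ A * τ ^ (1 - s) := by
      rw [← Finset.mul_sum, hA_def]
      have := sum_rpow_tail hs1 hτ N
      have hpC : (0 : ℝ) ≤ p * C₀ := by positivity
      calc p * C₀ * ∑ j ∈ Finset.range N, (τ + j) ^ (-s)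
          ≤ p * C₀ * ((1 + 1 / (s - 1)) * τ ^ (1 - s)) := mul_le_mul_of_nonneg_left this hpC
        _ = p * C₀ * (1 + 1 / (s - 1)) * τ ^ (1 - s) := by ring
    linarith [step1 ▸ le_trans step2 (le_trans step3 step4),
      le_trans (le_trans (step1 ▸ step2) step3) step4]
  have hSum1 : Summable (fun j : ℕ => a j * ((j : ℝ) + 1) ^ p) :=
    summable_of_sum_range_le haw_nonneg haw_bound
  have hS1 : (∑' j : ℕ, a j * ((j : ℝ) + 1) ^ p) ≤ A * τ ^ (1 - s) :=
    Real.tsum_le_of_sum_range_le haw_nonneg haw_bound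
  -- AM-GM pointwise
  set t : ℝ := τ ^ ((3 - p - ε₀) / 2) with ht_def
  have ht : 0 < t := Real.rpow_pos_of_pos hτ0 _
  have hpt : ∀ j : ℕ, Real.sqrt (a j) ≤
      t * (a j * ((j : ℝ) + 1) ^ p) + t⁻¹ * ((j : ℝ) + 1) ^ (-p) := by
    intro j
    have hw : (0 : ℝ) < (j : ℝ) + 1 := by positivity
    have hprod : (t * (a j * ((j : ℝ) + 1) ^ p)) * (t⁻¹ * ((j : ℝ) + 1) ^ (-p)) = a j := by
      have h1 : ((j : ℝ) + 1) ^ p * ((j : ℝ) + 1) ^ (-p) = 1 := by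
        rw [← Real.rpow_add hw]; simp
      calc (t * (a j * ((j : ℝ) + 1) ^ p)) * (t⁻¹ * ((j : ℝ) + 1) ^ (-p))
          = a j * (t * t⁻¹) * (((j : ℝ) + 1) ^ p * ((j : ℝ) + 1) ^ (-p)) := by ring
        _ = a j := by rw [h1, mul_inv_cancel₀ (ne_of_gt ht)]; ring
    have hx : 0 ≤ t * (a j * ((j : ℝ) + 1) ^ p) := mul_nonneg ht.le (haw_nonneg j)
    have hy : 0 ≤ t⁻¹ * ((j : ℝ) + 1) ^ (-p) := by positivity
    calc Real.sqrt (a j)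
        = Real.sqrt ((t * (a j * ((j : ℝ) + 1) ^ p)) * (t⁻¹ * ((j : ℝ) + 1) ^ (-p))) := by
          rw [hprod]
      _ ≤ t * (a j * ((j : ℝ) + 1) ^ p) + t⁻¹ * ((j : ℝ) + 1) ^ (-p) := sqrt_le_add hx hy
  have hSum2 : Summable (fun j : ℕ =>
      t * (a j * ((j : ℝ) + 1) ^ p) + t⁻¹ * ((j : ℝ) + 1) ^ (-p)) :=
    (hSum1.mul_left t).add (hK.mul_left t⁻¹)
  have hSqrtSum : Summable (fun j : ℕ => Real.sqrt (a j)) :=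
    Summable.of_nonneg_of_le (fun j => Real.sqrt_nonneg _) hpt hSum2
  have hexp : t * τ ^ (1 - s) = τ ^ (-(3 - p - ε₀) / 2) := by
    rw [ht_def, ← Real.rpow_add hτ0]
    congr 1
    rw [hs_def]; ring
  have htinv : t⁻¹ = τ ^ (-(3 - p - ε₀) / 2) := by
    rw [ht_def, ← Real.rpow_neg hτ0.le]
    congr 1
    ring
  calc (∑' j : ℕ, Real.sqrt (F (τ + j) - F (τ + j + 1)))
      = ∑' j : ℕ, Real.sqrt (a j) := by rfl
    _ ≤ ∑' j : ℕ, (t * (a j * ((j : ℝ) + 1) ^ p) + t⁻¹ * ((j : ℝ) + 1) ^ (-p)) :=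
        Summable.tsum_le_tsum hpt hSqrtSum hSum2
    _ = t * (∑' j : ℕ, a j * ((j : ℝ) + 1) ^ p) + t⁻¹ * K := by
        rw [Summable.tsum_add (hSum1.mul_left t) (hK.mul_left t⁻¹), tsum_mul_left, tsum_mul_left, hK_def]
    _ ≤ t * (A * τ ^ (1 - s)) + t⁻¹ * K := by
        have := mul_le_mul_of_nonneg_left hS1 ht.le
        linarith
    _ = A * (t * τ ^ (1 - s)) + t⁻¹ * K := by ring
    _ = (A + K) * τ ^ (-(3 - p - ε₀) / 2) := by rw [hexp, htinv]; ring
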